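/- Let κ be a positive integer, a > -1, and u > 0. Define P_n^{a,κ;u}(x) = P_n^{a,κ}(x) + [(n+a)(2^{a+κ}(κ-1)! + u(n+1)_κ (n+a+1)_κ)] / [(n+a+κ)(2^{a+κ}(κ-1)! + u(n)_κ (n+a)_κ)] · P_{n-1}^{a,κ}(x), and h_n^{a,b,N;κ}(x) = h_n^{a,b,N}(x) + [(n+a)R_κ^{-b,-a,a+b+N}(θ_{-n-1}^{-a-b})]/[(n+a+b)R_κ^{-b,-a,a+b+N}(θ_{-n}^{-a-b})] · h_{n-1}^{a,b,N}(x). Then for every real x and n ≥ 0, with b = b(N) = κ + 2^{a+κ}/(u N^κ), lim_{N→∞} h_n^{a, b(N), N; κ}((1-x)N/2) = P_n^{a,κ;u}(x). -/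

import Mathlib

open Filter Topology Finset

/-- Generalized binomial coefficient C(y, k) = y(y-1)⋯(y-k+1)/k!. -/
noncomputable def gbinom (y : ℝ) (k : ℕ) : ℝ :=
  (∏ i ∈ Finset.range k, (y - i)) / (Nat.factorial k)

/-- Pochhammer symbol (y)_k = y(y+1)⋯(y+k-1). -/
noncomputable def poch (y : ℝ) (k : ℕ) : ℝ :=
  ∏ i ∈ Finset.range k, (y + i)

/-- λ_j^u(y) = ∏_{i=0}^{j-1} (y - i(u+i+1)). -/
noncomputable def lam (j : ℕ) (u y : ℝ) : ℝ :=
  ∏ i ∈ Finset.range j, (y - i * (u + i + 1))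

/-- θ_x^u = x(x+u+1). -/
noncomputable def theta (x u : ℝ) : ℝ := x * (x + u + 1)

/-- Dual Hahn polynomial R_n^{a,b,N}(x). -/
noncomputable def dualHahn (n : ℕ) (a b N x : ℝ) : ℝ :=
  ∑ j ∈ Finset.range (n + 1),
    (poch (-(n : ℝ)) j * poch (-N + j) (n - j) * poch (a + j + 1) (n - j) /
      ((-1) ^ j * (Nat.factorial j))) * lam j (a + b) x

/-- Hahn polynomial h_n^{a,b,N}(x) (hypergeometric form). -/
noncomputable def hahn (n : ℕ) (a b N x : ℝ) : ℝ :=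
  (poch (a + 1) n / (Nat.factorial n)) *
    ∑ k ∈ Finset.range (n + 1),
      poch (-(n : ℝ)) k * poch (-x) k * poch ((n : ℝ) + a + b + 1) k /
        (poch (a + 1) k * poch (-N) k * (Nat.factorial k))

/-- Jacobi polynomial P_n^{α,β}(x). -/
noncomputable def jacobi (n : ℕ) (α β x : ℝ) : ℝ :=
  (∑ j ∈ Finset.range (n + 1),
      gbinom ((n : ℝ) + α) j * gbinom ((n : ℝ) + β) (n - j) * (x - 1) ^ (n - j) * (x + 1) ^ j) /
    2 ^ n

/-- Krall Jacobi polynomial P_n^{a,κ;u}(x). -/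
noncomputable def krallJacobi (n : ℕ) (a : ℝ) (κ : ℕ) (u x : ℝ) : ℝ :=
  jacobi n a κ x +
    (((n : ℝ) + a) *
        ((2 : ℝ) ^ (a + κ) * (Nat.factorial (κ - 1)) +
          u * poch ((n : ℝ) + 1) κ * poch ((n : ℝ) + a + 1) κ)) /
      (((n : ℝ) + a + κ) *
        ((2 : ℝ) ^ (a + κ) * (Nat.factorial (κ - 1)) +
          u * poch (n : ℝ) κ * poch ((n : ℝ) + a) κ)) *
      (if n = 0 then 0 else jacobi (n - 1) a κ x)

/-- Krall Hahn polynomial h_n^{a,b,N;κ}(x). -/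
noncomputable def krallHahn (n : ℕ) (a b N : ℝ) (κ : ℕ) (x : ℝ) : ℝ :=
  hahn n a b N x +
    (((n : ℝ) + a) * dualHahn κ (-b) (-a) (a + b + N) (theta (-(n : ℝ) - 1) (-a - b))) /
      (((n : ℝ) + a + b) * dualHahn κ (-b) (-a) (a + b + N) (theta (-(n : ℝ)) (-a - b))) *
      (if n = 0 then 0 else hahn (n - 1) a b N x)

/-!
Under `x ↦ (1 - x) N / 2`, each term of the ₃F₂ defining the Hahn polynomial converges, because
`(-(1 - x) N / 2)_k / (-N)_k → ((1 - x) / 2)^k` and `b → κ`; the limit is the ₂F₁ form of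
`P_n^{a,κ}`, which Chu–Vandermonde identifies with the binomial sum defining `jacobi`.

Write `b = κ + ε` with `ε N^κ → L` (here `L = 2^{a+κ} / u`). In the `j`-th summand of
`R_κ^{-b,-a,a+b+N}(θ_{-t}^{-a-b})` with `j < κ`, the factor `(j + 1 - b)_{κ-j}` contains
`κ - b = -ε` while `(j - a - b - N)_{κ-j} ~ (-N)^{κ-j}`, so the summand behaves like `N^{-j} L`:
only `j = 0` survives, contributing `(κ - 1)! L`, and the top summand tends to
`λ_κ = (t)_κ (t + a)_κ`. Hence `R → (κ - 1)! L + (t)_κ (t + a)_κ`, and the ratio of these limits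
at `t = n + 1` and `t = n` is the coefficient of `P_{n-1}^{a,κ}` in `P_n^{a,κ;u}`.
-/

open scoped Nat

lemma poch_add (z : ℝ) (k l : ℕ) : poch z (k + l) = poch z k * poch (z + k) l := by
  simp only [poch, prod_range_add, Nat.cast_add, add_assoc]

lemma poch_zero (z : ℝ) : poch z 0 = 1 := prod_range_zero _

lemma poch_succ (z : ℝ) (k : ℕ) : poch z (k + 1) = poch z k * (z + k) :=
  prod_range_succ _ _

lemma poch_eq_prod_range_sub (z : ℝ) (k : ℕ) :
    poch z k = ∏ i ∈ range k, (z + k - 1 - i) := by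
  rw [poch, ← prod_range_reflect]
  refine prod_congr rfl fun i hi => ?_
  have hik : 1 + i ≤ k := by rw [mem_range] at hi; omega
  rw [Nat.sub_sub, Nat.cast_sub hik]
  push_cast
  ring

lemma poch_neg_natCast (m k : ℕ) : poch (-(m : ℝ)) k = (-1) ^ k * m.descFactorial k := by
  rw [← descPochhammer_eval_eq_descFactorial ℝ, descPochhammer_eval_eq_prod_range, poch]
  nth_rw 2 [← card_range k]
  rw [← prod_const, ← prod_mul_distrib]
  exact prod_congr rfl fun i _ => by ring

lemma poch_pos {z : ℝ} (hz : 0 < z) (k : ℕ) : 0 < poch z k :=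
  prod_pos fun i _ => by positivity

lemma continuous_poch (k : ℕ) : Continuous fun z => poch z k := by
  unfold poch; fun_prop

lemma gbinom_eq_choose (y : ℝ) (k : ℕ) : gbinom y k = Ring.choose y k := by
  rw [Ring.choose_eq_smul, ← Polynomial.aeval_eq_smeval, Polynomial.aeval_def,
    ← Polynomial.eval_map, descPochhammer_map, descPochhammer_eval_eq_prod_range, smul_eq_mul,
    gbinom, div_eq_inv_mul]

lemma gbinom_add_natCast_self (z : ℝ) (k : ℕ) : gbinom (z + k) k = poch (z + 1) k / k ! := by
  rw [gbinom, poch_eq_prod_range_sub]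
  congr 1
  exact prod_congr rfl fun i _ => by ring

lemma sum_gbinom_mul_gbinom (r s : ℝ) (n : ℕ) :
    ∑ l ∈ range (n + 1), gbinom r l * gbinom s (n - l) = gbinom (r + s) n := by
  simp only [gbinom_eq_choose]
  rw [Ring.add_choose_eq n (Commute.all r s),
    Nat.sum_antidiagonal_eq_sum_range_succ (fun i j => Ring.choose r i * Ring.choose s j)]

lemma choose_mul_gbinom (r : ℝ) {n k : ℕ} (hkn : k ≤ n) :
    n.choose k * gbinom r n = gbinom r k * gbinom (r - k) (n - k) := by
  simpa [gbinom_eq_choose, nsmul_eq_mul] using Ring.choose_smul_choose r hkn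

lemma jacobi_eq_sum_pow (m : ℕ) (α β x : ℝ) :
    jacobi m α β x = ∑ i ∈ range (m + 1),
      gbinom (m + α) i * gbinom (2 * m + α + β - i) (m - i) * ((x - 1) / 2) ^ (m - i) := by
  set s := (x - 1) / 2
  have hexpand : ∀ j ∈ range (m + 1),
      gbinom (m + α) j * gbinom (m + β) (m - j) * (x - 1) ^ (m - j) * (x + 1) ^ j / 2 ^ m =
        ∑ i ∈ range (j + 1),
          gbinom (m + α) j * j.choose i * gbinom (m + β) (m - j) * s ^ (m - i) := by
    intro j hj
    have hjm : j ≤ m := Nat.lt_succ_iff.mp (mem_range.mp hj)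
    have hx : (x - 1) ^ (m - j) * (x + 1) ^ j / 2 ^ m = s ^ (m - j) * (1 + s) ^ j := by
      rw [← Nat.sub_add_cancel hjm, pow_add, Nat.add_sub_cancel, show x - 1 = 2 * s by ring,
        show x + 1 = 2 * (1 + s) by ring, mul_pow, mul_pow]
      field_simp
    calc gbinom (m + α) j * gbinom (m + β) (m - j) * (x - 1) ^ (m - j) * (x + 1) ^ j / 2 ^ m
        = gbinom (m + α) j * gbinom (m + β) (m - j) * s ^ (m - j) * (1 + s) ^ j := by
          linear_combination gbinom (m + α) j * gbinom (m + β) (m - j) * hx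
      _ = _ := by
          rw [add_pow, mul_sum]
          refine sum_congr rfl fun i hi => ?_
          have hij : i ≤ j := Nat.lt_succ_iff.mp (mem_range.mp hi)
          rw [show m - i = m - j + (j - i) by omega, pow_add, one_pow]
          ring
  have hinner : ∀ i ∈ range (m + 1),
      ∑ j ∈ Ico i (m + 1), gbinom (m + α) j * j.choose i * gbinom (m + β) (m - j) * s ^ (m - i) =
        gbinom (m + α) i * gbinom (2 * m + α + β - i) (m - i) * s ^ (m - i) := by
    intro i hi
    have him : i ≤ m := Nat.lt_succ_iff.mp (mem_range.mp hi)
    have hvdm := sum_gbinom_mul_gbinom (m + α - i) (m + β) (m - i)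
    rw [show m + α - i + (m + β) = 2 * m + α + β - i by ring] at hvdm
    rw [sum_Ico_eq_sum_range, show m + 1 - i = m - i + 1 by omega, ← hvdm, mul_sum, sum_mul]
    refine sum_congr rfl fun l _ => ?_
    rw [mul_comm (gbinom _ _) ((i + l).choose i : ℝ), choose_mul_gbinom _ (Nat.le_add_right i l),
      Nat.add_sub_cancel_left, show m - (i + l) = m - i - l by omega]
    ring
  rw [jacobi, sum_div, sum_congr rfl hexpand, range_eq_Ico]
  simp_rw [range_eq_Ico]
  rw [← sum_Ico_Ico_comm]
  exact sum_congr rfl fun i hi => hinner i (by rwa [range_eq_Ico])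

lemma jacobi_eq_hypergeometric {α : ℝ} (hα : -1 < α) (m : ℕ) (β x : ℝ) :
    jacobi m α β x = poch (α + 1) m / m ! * ∑ k ∈ range (m + 1),
      poch (-(m : ℝ)) k * poch (m + α + β + 1) k * ((1 - x) / 2) ^ k / (poch (α + 1) k * k !) := by
  rw [jacobi_eq_sum_pow, ← sum_range_reflect, mul_sum]
  refine sum_congr rfl fun k hk => ?_
  have hkm : k ≤ m := Nat.lt_succ_iff.mp (mem_range.mp hk)
  have hcast : ((m - k : ℕ) : ℝ) = m - k := Nat.cast_sub hkm
  rw [Nat.add_sub_cancel, show m - (m - k) = k by omega]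
  have hleft : gbinom (m + α) (m - k) = poch (α + k + 1) (m - k) / (m - k)! := by
    rw [← gbinom_add_natCast_self, hcast]; congr 1; ring
  have hright : gbinom (2 * m + α + β - (m - k : ℕ)) k = poch (m + α + β + 1) k / k ! := by
    rw [← gbinom_add_natCast_self, hcast]; congr 1; ring
  have hpoch_split : poch (α + 1) m = poch (α + 1) k * poch (α + k + 1) (m - k) := by
    rw [← add_right_comm, ← poch_add, Nat.add_sub_cancel' hkm]
  have hfact : (m ! : ℝ) = (m - k)! * m.descFactorial k := by
    exact_mod_cast (Nat.factorial_mul_descFactorial hkm).symm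
  have hdesc : (m.descFactorial k : ℝ) ≠ 0 := by
    exact_mod_cast (Nat.descFactorial_eq_zero_iff_lt.not.mpr (not_lt.mpr hkm))
  have hpoch : poch (α + 1) k ≠ 0 := (poch_pos (by linarith) k).ne'
  rw [hleft, hright, hpoch_split, hfact, poch_neg_natCast,
    show (1 - x) / 2 = -1 * ((x - 1) / 2) by ring, mul_pow]
  have hsign : ((-1 : ℝ) ^ k) * (-1) ^ k = 1 := by rw [← mul_pow]; norm_num
  field_simp
  linear_combination
    -(poch (α + k + 1) (m - k) * poch (m + α + β + 1) k * ((x - 1) / 2) ^ k) * hsign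

lemma tendsto_poch_div_pow {g : ℝ → ℝ} {r : ℝ} (hg : Tendsto (fun N => g N / N) atTop (𝓝 r))
    (k : ℕ) : Tendsto (fun N => poch (g N) k / N ^ k) atTop (𝓝 (r ^ k)) := by
  have hfactor (i : ℕ) : Tendsto (fun N => g N / N + i / N) atTop (𝓝 r) := by
    simpa using hg.add (tendsto_const_nhds.div_atTop tendsto_id)
  have hprod (N : ℝ) : poch (g N) k / N ^ k = ∏ i ∈ range k, (g N / N + i / N) := by
    simp_rw [← add_div, prod_div_distrib, prod_const, card_range, poch]
  simpa [hprod] using tendsto_finsetProd (range k) fun i _ => hfactor i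

lemma tendsto_poch_div_poch (x : ℝ) (k : ℕ) :
    Tendsto (fun N => poch (-((1 - x) * N / 2)) k / poch (-N) k) atTop
      (𝓝 (((1 - x) / 2) ^ k)) := by
  have hnum := tendsto_poch_div_pow (g := fun N => -((1 - x) * N / 2)) (r := -((1 - x) / 2))
    (tendsto_const_nhds.congr' <| (eventually_ne_atTop 0).mono fun N hN => by field_simp) k
  have hden := tendsto_poch_div_pow (g := fun N => -N) (r := -1)
    (tendsto_const_nhds.congr' <| (eventually_ne_atTop 0).mono fun N hN => by field_simp) k
  have hratio := hnum.div hden (pow_ne_zero _ (by norm_num))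
  rw [← div_pow, neg_div_neg_eq, div_one] at hratio
  refine hratio.congr' <| (eventually_ne_atTop 0).mono fun N hN => ?_
  exact div_div_div_cancel_right₀ (pow_ne_zero _ hN) _ _

lemma tendsto_hahn {b : ℝ → ℝ} {β a : ℝ} (hb : Tendsto b atTop (𝓝 β)) (ha : -1 < a) (m : ℕ)
    (x : ℝ) : Tendsto (fun N => hahn m a (b N) N ((1 - x) * N / 2)) atTop (𝓝 (jacobi m a β x)) := by
  rw [jacobi_eq_hypergeometric ha]
  refine Tendsto.const_mul _ (tendsto_finsetSum _ fun k _ => ?_)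
  have hcoeff : Tendsto
      (fun N => poch (-(m : ℝ)) k * poch (m + a + b N + 1) k / (poch (a + 1) k * k !)) atTop
      (𝓝 (poch (-(m : ℝ)) k * poch (m + a + β + 1) k / (poch (a + 1) k * k !))) :=
    ((((continuous_poch k).tendsto _).comp ((hb.const_add _).add_const 1)).const_mul _).div_const _
  convert hcoeff.mul (tendsto_poch_div_poch x k) using 2 <;> ring

lemma lam_zero (u y : ℝ) : lam 0 u y = 1 := prod_range_zero _

lemma lam_theta_neg (κ : ℕ) (a t : ℝ) :
    lam κ (-κ + -a) (theta (-t) (-a - κ)) = poch t κ * poch (t + a) κ := by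
  rw [poch_eq_prod_range_sub (t + a), poch, ← prod_mul_distrib, lam]
  exact prod_congr rfl fun i _ => by simp only [theta]; ring

lemma tendsto_lam_theta {ι : Type*} {l : Filter ι} {b : ι → ℝ} {β : ℝ} (hb : Tendsto b l (𝓝 β))
    (j : ℕ) (a t : ℝ) : Tendsto (fun N => lam j (-b N + -a) (theta (-t) (-a - b N))) l
      (𝓝 (lam j (-β + -a) (theta (-t) (-a - β)))) := by
  have hcont : Continuous fun β : ℝ => lam j (-β + -a) (theta (-t) (-a - β)) := by
    unfold lam theta; fun_prop
  exact (hcont.tendsto β).comp hb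

lemma tendsto_of_tendsto_sub_mul_pow {κ : ℕ} (hκ : 0 < κ) {b : ℝ → ℝ} {L : ℝ}
    (hb : Tendsto (fun N => (b N - κ) * N ^ κ) atTop (𝓝 L)) : Tendsto b atTop (𝓝 κ) := by
  have h := (hb.div_atTop (tendsto_pow_atTop hκ.ne')).const_add (κ : ℝ)
  rw [add_zero] at h
  refine h.congr' ((eventually_ne_atTop 0).mono fun N hN => ?_)
  field_simp
  ring

noncomputable def dualHahnTerm (n j : ℕ) (a b N x : ℝ) : ℝ :=
  poch (-(n : ℝ)) j * poch (-N + j) (n - j) * poch (a + j + 1) (n - j) /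
    ((-1) ^ j * j !) * lam j (a + b) x

lemma dualHahn_eq_sum (n : ℕ) (a b N x : ℝ) :
    dualHahn n a b N x = ∑ j ∈ range (n + 1), dualHahnTerm n j a b N x := rfl

section DualHahnLimit

variable {κ : ℕ} {b : ℝ → ℝ} {L : ℝ}

lemma tendsto_poch_mul_poch_mul_pow {j : ℕ} (hj : j < κ)
    (hb : Tendsto (fun N => (b N - κ) * N ^ κ) atTop (𝓝 L)) (a : ℝ) :
    Tendsto (fun N => poch (-(a + b N + N) + j) (κ - j) * poch (-b N + j + 1) (κ - j) * N ^ j)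
      atTop (𝓝 ((-1) ^ (κ - j) * poch (-κ + j + 1) (κ - j - 1) * -L)) := by
  have hbκ := tendsto_of_tendsto_sub_mul_pow (by omega) hb
  have hlin : Tendsto (fun N => (-(a + b N + N) + j) / N) atTop (𝓝 (-1)) := by
    have h := (((hbκ.const_add a).neg.add_const (j : ℝ)).div_atTop tendsto_id).sub_const 1
    rw [zero_sub] at h
    refine h.congr' ((eventually_ne_atTop 0).mono fun N hN => ?_)
    simp only [id]
    field_simp
    ring
  have hpoch : Tendsto (fun N => poch (-b N + j + 1) (κ - j - 1)) atTop
      (𝓝 (poch (-κ + j + 1) (κ - j - 1))) :=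
    ((continuous_poch _).tendsto _).comp ((hbκ.neg.add_const _).add_const 1)
  refine (((tendsto_poch_div_pow hlin (κ - j)).mul hpoch).mul hb.neg).congr'
    ((eventually_ne_atTop 0).mono fun N hN => ?_)
  obtain ⟨q, hq⟩ : ∃ q, κ - j = q + 1 := ⟨κ - j - 1, by omega⟩
  have hκ : (κ : ℝ) = j + q + 1 := by exact_mod_cast (show κ = j + q + 1 by omega)
  have hpow : N ^ κ = N ^ (q + 1) * N ^ j := by rw [← pow_add]; congr 1; omega
  beta_reduce
  -- the last factor of `(-b + j + 1)_{κ-j}` is `κ - b`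
  rw [hpow, hq, Nat.add_sub_cancel, poch_succ (-b N + j + 1) q, hκ]
  field_simp
  ring

lemma tendsto_dualHahnTerm_zero (hκ : 0 < κ)
    (hb : Tendsto (fun N => (b N - κ) * N ^ κ) atTop (𝓝 L)) (a t : ℝ) :
    Tendsto (fun N => dualHahnTerm κ 0 (-b N) (-a) (a + b N + N) (theta (-t) (-a - b N))) atTop
      (𝓝 ((κ - 1)! * L)) := by
  have hval : (-1 : ℝ) ^ (κ - 0) * poch (-κ + (0 : ℕ) + 1) (κ - 0 - 1) * -L = (κ - 1)! * L := by
    obtain ⟨k, rfl⟩ : ∃ k, κ = k + 1 := ⟨κ - 1, by omega⟩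
    have hsign : ((-1 : ℝ) ^ k) * (-1) ^ k = 1 := by rw [← mul_pow]; norm_num
    rw [show -((k + 1 : ℕ) : ℝ) + (0 : ℕ) + 1 = -k by push_cast; ring, Nat.sub_zero,
      Nat.add_sub_cancel, poch_neg_natCast, Nat.descFactorial_self]
    linear_combination (k ! * L) * hsign
  have h := tendsto_poch_mul_poch_mul_pow hκ hb a
  rw [hval] at h
  simpa [dualHahnTerm, poch_zero, lam_zero] using h

lemma tendsto_dualHahnTerm_of_pos_of_lt {j : ℕ} (hj : 0 < j) (hjκ : j < κ)
    (hb : Tendsto (fun N => (b N - κ) * N ^ κ) atTop (𝓝 L)) (a t : ℝ) :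
    Tendsto (fun N => dualHahnTerm κ j (-b N) (-a) (a + b N + N) (theta (-t) (-a - b N))) atTop
      (𝓝 0) := by
  have hbκ := tendsto_of_tendsto_sub_mul_pow (by omega) hb
  have hinv : Tendsto (fun N : ℝ => (N ^ j)⁻¹) atTop (𝓝 0) :=
    tendsto_inv_atTop_zero.comp (tendsto_pow_atTop hj.ne')
  have h := ((((tendsto_poch_mul_poch_mul_pow hjκ hb a).mul hinv).const_mul
    (poch (-κ) j / ((-1) ^ j * j !))).mul (tendsto_lam_theta hbκ j a t))
  rw [mul_zero, mul_zero, zero_mul] at h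
  refine h.congr' ((eventually_ne_atTop 0).mono fun N hN => ?_)
  simp only [dualHahnTerm]
  field_simp

lemma tendsto_dualHahnTerm_self (hbκ : Tendsto b atTop (𝓝 κ)) (a t : ℝ) :
    Tendsto (fun N => dualHahnTerm κ κ (-b N) (-a) (a + b N + N) (theta (-t) (-a - b N))) atTop
      (𝓝 (poch t κ * poch (t + a) κ)) := by
  have hcoeff : poch (-(κ : ℝ)) κ / ((-1) ^ κ * κ !) = 1 := by
    rw [poch_neg_natCast, Nat.descFactorial_self, div_self (by positivity)]
  have h := tendsto_lam_theta hbκ κ a t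
  rw [lam_theta_neg] at h
  simpa only [dualHahnTerm, Nat.sub_self, poch_zero, mul_one, hcoeff, one_mul] using h

lemma tendsto_dualHahn (hκ : 0 < κ) (hb : Tendsto (fun N => (b N - κ) * N ^ κ) atTop (𝓝 L))
    (a t : ℝ) :
    Tendsto (fun N => dualHahn κ (-b N) (-a) (a + b N + N) (theta (-t) (-a - b N))) atTop
      (𝓝 ((κ - 1)! * L + poch t κ * poch (t + a) κ)) := by
  have hsplit (N : ℝ) : dualHahn κ (-b N) (-a) (a + b N + N) (theta (-t) (-a - b N)) =
      dualHahnTerm κ 0 (-b N) (-a) (a + b N + N) (theta (-t) (-a - b N)) +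
        ∑ j ∈ (range κ).erase 0,
          dualHahnTerm κ j (-b N) (-a) (a + b N + N) (theta (-t) (-a - b N)) +
          dualHahnTerm κ κ (-b N) (-a) (a + b N + N) (theta (-t) (-a - b N)) := by
    rw [dualHahn_eq_sum, sum_range_succ, ← add_sum_erase _ _ (mem_range.mpr hκ)]
  have hmiddle := tendsto_finsetSum ((range κ).erase 0) fun j hj =>
    tendsto_dualHahnTerm_of_pos_of_lt (Nat.pos_of_ne_zero (ne_of_mem_erase hj))
      (mem_range.mp (mem_of_mem_erase hj)) hb a t
  rw [sum_const_zero] at hmiddle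
  simpa only [← hsplit, add_zero] using ((tendsto_dualHahnTerm_zero hκ hb a t).add hmiddle).add
    (tendsto_dualHahnTerm_self (tendsto_of_tendsto_sub_mul_pow hκ hb) a t)

end DualHahnLimit

lemma tendsto_krallHahn {κ : ℕ} (hκ : 0 < κ) {b : ℝ → ℝ} {L : ℝ} (hL : 0 < L)
    (hb : Tendsto (fun N => (b N - κ) * N ^ κ) atTop (𝓝 L)) {a : ℝ} (ha : -1 < a) (n : ℕ)
    (x : ℝ) :
    Tendsto (fun N => krallHahn n a (b N) N κ ((1 - x) * N / 2)) atTop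
      (𝓝 (jacobi n a κ x +
        (n + a) * ((κ - 1)! * L + poch (n + 1) κ * poch (n + a + 1) κ) /
          ((n + a + κ) * ((κ - 1)! * L + poch n κ * poch (n + a) κ)) *
        (if n = 0 then 0 else jacobi (n - 1) a κ x))) := by
  have hbκ := tendsto_of_tendsto_sub_mul_pow hκ hb
  have hpoch_nonneg : 0 ≤ poch n κ * poch (n + a) κ := by
    rcases Nat.eq_zero_or_pos n with rfl | hn
    · simp [poch, prod_eq_zero (mem_range.mpr hκ)]
    · have : (1 : ℝ) ≤ n := Nat.one_le_cast.mpr hn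
      exact (mul_pos (poch_pos (by positivity) κ) (poch_pos (by linarith) κ)).le
  have hden : ((n : ℝ) + a + κ) * ((κ - 1)! * L + poch n κ * poch (n + a) κ) ≠ 0 := by
    have hnaκ : (0 : ℝ) < n + a + κ := by
      have : (1 : ℝ) ≤ κ := Nat.one_le_cast.mpr hκ
      linarith [n.cast_nonneg (α := ℝ)]
    have : (0 : ℝ) < (κ - 1)! * L := by positivity
    exact (mul_pos hnaκ (by linarith)).ne'
  have hprev : Tendsto (fun N => if n = 0 then 0 else hahn (n - 1) a (b N) N ((1 - x) * N / 2))
      atTop (𝓝 (if n = 0 then 0 else jacobi (n - 1) a κ x)) := by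
    split_ifs
    · exact tendsto_const_nhds
    · exact tendsto_hahn hbκ ha (n - 1) x
  have hnext := tendsto_dualHahn hκ hb a (n + 1)
  rw [neg_add', add_right_comm _ (1 : ℝ) a] at hnext
  refine (tendsto_hahn hbκ ha n x).add (Tendsto.mul ?_ hprev)
  exact (hnext.const_mul _).div ((hbκ.const_add _).mul (tendsto_dualHahn hκ hb a n)) hden

theorem stmt19_general (κ : ℕ) (hκ : 0 < κ) (a : ℝ) (ha : -1 < a) (u : ℝ) (hu : 0 < u)
    (n : ℕ) (x : ℝ) :
    Tendsto
      (fun N : ℝ =>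
        krallHahn n a ((κ : ℝ) + (2 : ℝ) ^ (a + κ) / (u * N ^ κ)) N κ ((1 - x) * N / 2))
      atTop (𝓝 (krallJacobi n a κ u x)) := by
  have hb : Tendsto (fun N : ℝ => ((κ : ℝ) + 2 ^ (a + κ) / (u * N ^ κ) - κ) * N ^ κ) atTop
      (𝓝 (2 ^ (a + κ) / u)) :=
    tendsto_const_nhds.congr' ((eventually_ne_atTop 0).mono fun N hN => by field_simp; ring)
  convert tendsto_krallHahn hκ (by positivity) hb ha n x using 2
  have hscale (P Q : ℝ) : (κ - 1)! * (2 ^ (a + κ) / u) + P * Q =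
      (2 ^ (a + κ) * (κ - 1)! + u * P * Q) / u := by
    field_simp
  rw [krallJacobi, hscale, hscale, mul_div_assoc', mul_div_assoc', div_div_div_cancel_right₀ hu.ne']

theorem stmt19 (κ : ℕ) (hκ : 0 < κ) (a : ℝ) (ha : -1 < a) (u : ℝ) (hu : 0 < u)
    (n : ℕ) (x : ℝ)
    (hden : ∀ N : ℝ,
      dualHahn κ (-((κ : ℝ) + (2 : ℝ) ^ (a + κ) / (u * N ^ κ))) (-a)
          (a + ((κ : ℝ) + (2 : ℝ) ^ (a + κ) / (u * N ^ κ)) + N)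
          (theta (-(n : ℝ)) (-a - ((κ : ℝ) + (2 : ℝ) ^ (a + κ) / (u * N ^ κ)))) ≠ 0) :
    Tendsto
      (fun N : ℝ =>
        krallHahn n a ((κ : ℝ) + (2 : ℝ) ^ (a + κ) / (u * N ^ κ)) N κ ((1 - x) * N / 2))
      atTop (𝓝 (krallJacobi n a κ u x)) :=
  stmt19_general κ hκ a ha u hu n x
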